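/- Let A and B be positive definite complex n×n matrices and let α, β ∈ [0,1]. Then A ♯_α B ≤ ((A ♯_α B) ♯_β A) ∇_α ((A ♯_α B) ♯_β B) ≤ A ∇_α B in the Loewner order. -/

import Mathlib

open Matrix ComplexOrder

/-- Real power of a matrix via the continuous functional calculus
(for a positive definite matrix this is the usual functional-calculus power). -/
noncomputable def mpow {n : ℕ} (A : Matrix (Fin n) (Fin n) ℂ) (t : ℝ) :
    Matrix (Fin n) (Fin n) ℂ :=
  cfc (fun x : ℝ => x ^ t) A

/-- The weighted geometric mean `A ♯ₜ B = A^{1/2} (A^{-1/2} B A^{-1/2})^t A^{1/2}`. -/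
noncomputable def gm {n : ℕ} (t : ℝ) (A B : Matrix (Fin n) (Fin n) ℂ) :
    Matrix (Fin n) (Fin n) ℂ :=
  mpow A (1/2) * mpow (mpow A (-(1/2)) * B * mpow A (-(1/2))) t * mpow A (1/2)

/-- The weighted arithmetic mean `A ∇ₜ B = (1-t)A + tB`. -/
noncomputable def am {n : ℕ} (t : ℝ) (A B : Matrix (Fin n) (Fin n) ℂ) :
    Matrix (Fin n) (Fin n) ℂ :=
  (1 - t) • A + t • B

/-- The weighted harmonic mean `A !ₜ B = ((1-t)A⁻¹ + tB⁻¹)⁻¹`. -/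
noncomputable def hm {n : ℕ} (t : ℝ) (A B : Matrix (Fin n) (Fin n) ℂ) :
    Matrix (Fin n) (Fin n) ℂ :=
  ((1 - t) • A⁻¹ + t • B⁻¹)⁻¹

/-- The Loewner order: `X ≤ Y` iff `Y - X` is positive semidefinite. -/
noncomputable def loewnerLE {n : ℕ} (X Y : Matrix (Fin n) (Fin n) ℂ) : Prop :=
  (Y - X).PosSemidef

/-!
Put `R = A^{1/2}` and `M = A^{-1/2} B A^{-1/2}`, so that `A ♯_t B = R M^t R`. The curve
`t ↦ A ♯_t B` is a geodesic: `(A ♯_s B) ♯_t (A ♯_r B) = A ♯_{(1-t)s+tr} B`. Indeed, with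
`G = A ♯_s B` the matrix `U = G^{-1/2} R M^{s/2}` is unitary and
`G^{-1/2} (A ♯_r B) G^{-1/2} = U M^{r-s} U*`, so its `t`-th power is `U M^{t(r-s)} U*`.
Hence `(A ♯_α B) ♯_β A` and `(A ♯_α B) ♯_β B` are `A ♯_γ B` and `A ♯_δ B` with
`γ = (1-β)α`, `δ = (1-β)α + β`, and `(1-α)γ + αδ = α`. The first inequality is convexity
of `p ↦ M^p`, which reduces to convexity of `p ↦ x^p` on the spectrum of `M`; the second is
the weighted AM–GM inequality `A ♯_γ B ≤ A ∇_γ B` applied to both terms.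
-/

open scoped MatrixOrder
open CFC

namespace Matrix

variable {n : ℕ}

lemma cfc_unitary_conj {U : Matrix (Fin n) (Fin n) ℂ} (hU : U ∈ unitary _)
    (f : ℝ → ℝ) {N : Matrix (Fin n) (Fin n) ℂ} (hN : IsSelfAdjoint N) :
    cfc f (U * N * star U) = U * cfc f N * star U := by
  have hφ : Continuous (Unitary.conjStarAlgAut ℂ (Matrix (Fin n) (Fin n) ℂ) ⟨U, hU⟩) := by
    show Continuous fun X => U * X * star U
    fun_prop
  exact (StarAlgHomClass.map_cfc (S := ℂ) (Unitary.conjStarAlgAut ℂ _ ⟨U, hU⟩) f N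
    (finite_real_spectrum.continuousOn _) hφ).symm

lemma rpow_unitary_conj {U : Matrix (Fin n) (Fin n) ℂ} (hU : U ∈ unitary _)
    {N : Matrix (Fin n) (Fin n) ℂ} (hN : 0 ≤ N) (t : ℝ) :
    (U * N * star U) ^ t = U * N ^ t * star U := by
  have hUN : 0 ≤ U * N * star U := star_right_conjugate_nonneg hN U
  rw [rpow_eq_cfc_real hN, rpow_eq_cfc_real hUN, cfc_unitary_conj hU _ hN.isSelfAdjoint]

variable {a : Matrix (Fin n) (Fin n) ℂ}

lemma rpow_rpow' (ha : IsStrictlyPositive a) (x y : ℝ) : (a ^ x) ^ y = a ^ (x * y) := by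
  rcases eq_or_ne x 0 with rfl | hx
  · simp [rpow_zero a ha.nonneg, one_rpow]
  · exact rpow_rpow a x y hx

lemma rpow_conj_rpow_neg_cancel (ha : IsStrictlyPositive a) (x : ℝ)
    (b : Matrix (Fin n) (Fin n) ℂ) : a ^ x * (a ^ (-x) * b * a ^ (-x)) * a ^ x = b := by
  calc a ^ x * (a ^ (-x) * b * a ^ (-x)) * a ^ x = a ^ (x + -x) * b * a ^ (-x + x) := by
        simp only [rpow_add ha.isUnit, mul_assoc]
    _ = b := by simp [rpow_zero a ha.nonneg]

lemma rpow_neg_half_conj_self (ha : IsStrictlyPositive a) :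
    a ^ (-(1/2) : ℝ) * a * a ^ (-(1/2) : ℝ) = 1 := by
  nth_rw 2 [← rpow_one a ha.nonneg]
  rw [← rpow_add ha.isUnit, ← rpow_add ha.isUnit]
  norm_num [rpow_zero a ha.nonneg]

lemma convexOn_rpow_left (ha : IsStrictlyPositive a) :
    ConvexOn ℝ Set.univ (fun p : ℝ => a ^ p) := by
  refine ⟨convex_univ, fun p _ q _ s t hs ht hst => ?_⟩
  have hcont (f : ℝ → ℝ) : ContinuousOn f (spectrum ℝ a) :=
    finite_real_spectrum.continuousOn f
  simp only [rpow_eq_cfc_real ha.nonneg]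
  rw [← cfc_smul s _ a (hcont _), ← cfc_smul t _ a (hcont _),
    ← cfc_add a _ _ (hcont _) (hcont _)]
  exact cfc_mono (fun x hx => (_root_.convexOn_rpow_left (ha.spectrum_pos hx)).2 trivial trivial
    hs ht hst) (hcont _) (hcont _)

lemma rpow_conj_geodesic {R M : Matrix (Fin n) (Fin n) ℂ} (hR : IsStrictlyPositive R)
    (hM : IsStrictlyPositive M) (s r t : ℝ) :
    let G := R * M ^ s * R
    G ^ (1/2 : ℝ) * (G ^ (-(1/2) : ℝ) * (R * M ^ r * R) * G ^ (-(1/2) : ℝ)) ^ t *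
        G ^ (1/2 : ℝ)
      = R * M ^ ((1 - t) * s + t * r) * R := by
  intro G
  have hG : IsStrictlyPositive G := by
    simpa [G] using IsStrictlyPositive.conjugate_of_isUnit_of_isSelfAdjoint (M ^ s) R hR.isUnit
  have hM3 (x y z : ℝ) : M ^ x * M ^ y * M ^ z = M ^ (x + y + z) := by
    rw [rpow_add hM.isUnit, rpow_add hM.isUnit]
  set U := G ^ (-(1/2) : ℝ) * R * M ^ (s / 2)
  have hUstar : star U = M ^ (s / 2) * R * G ^ (-(1/2) : ℝ) := by
    simp [U, mul_assoc, (rpow_nonneg (a := M)).isSelfAdjoint.star_eq, hR.isSelfAdjoint.star_eq,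
      (rpow_nonneg (a := G)).isSelfAdjoint.star_eq]
  have hUMU (x : ℝ) : U * M ^ x * star U =
      G ^ (-(1/2) : ℝ) * (R * M ^ (s / 2 + x + s / 2) * R) * G ^ (-(1/2) : ℝ) := by
    rw [hUstar, ← hM3]
    simp only [U, mul_assoc]
  have hU : U ∈ unitary (Matrix (Fin n) (Fin n) ℂ) := by
    rw [← unitaryGroup, mem_unitaryGroup_iff]
    have h := hUMU 0
    rw [rpow_zero M hM.nonneg, mul_one, add_zero, add_halves] at h
    rw [h]
    exact rpow_neg_half_conj_self hG
  have hK : G ^ (-(1/2) : ℝ) * (R * M ^ r * R) * G ^ (-(1/2) : ℝ) =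
      U * M ^ (r - s) * star U := by
    rw [hUMU, show s / 2 + (r - s) + s / 2 = r by ring]
  rw [hK, rpow_unitary_conj hU rpow_nonneg, rpow_rpow' hM, hUMU, rpow_conj_rpow_neg_cancel hG,
    show s / 2 + (r - s) * t + s / 2 = (1 - t) * s + t * r by ring]

end Matrix

open Matrix

variable {n : ℕ} {A B : Matrix (Fin n) (Fin n) ℂ}

lemma mpow_eq_rpow (hA : 0 ≤ A) (t : ℝ) : mpow A t = A ^ t :=
  (rpow_eq_cfc_real hA).symm

lemma loewnerLE_iff_le {X Y : Matrix (Fin n) (Fin n) ℂ} : loewnerLE X Y ↔ X ≤ Y := Iff.rfl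

lemma rpow_neg_half_conj_nonneg (hB : 0 ≤ B) :
    0 ≤ A ^ (-(1/2) : ℝ) * B * A ^ (-(1/2) : ℝ) :=
  IsSelfAdjoint.conjugate_nonneg hB rpow_nonneg.isSelfAdjoint

lemma gm_eq_rpow (hA : 0 ≤ A) (hB : 0 ≤ B) (t : ℝ) :
    gm t A B =
      A ^ (1/2 : ℝ) * (A ^ (-(1/2) : ℝ) * B * A ^ (-(1/2) : ℝ)) ^ t * A ^ (1/2 : ℝ) := by
  rw [gm, mpow_eq_rpow hA, mpow_eq_rpow hA, mpow_eq_rpow (rpow_neg_half_conj_nonneg hB)]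

lemma isStrictlyPositive_rpow_neg_half_conj (hA : A.PosDef) (hB : B.PosDef) :
    IsStrictlyPositive (A ^ (-(1/2) : ℝ) * B * A ^ (-(1/2) : ℝ)) :=
  IsStrictlyPositive.conjugate_of_isUnit_of_isSelfAdjoint B _
    (IsStrictlyPositive.rpow A _ hA.isStrictlyPositive).isUnit rpow_nonneg.isSelfAdjoint
    hB.isStrictlyPositive

lemma gm_isStrictlyPositive (hA : A.PosDef) (hB : B.PosDef) (t : ℝ) :
    IsStrictlyPositive (gm t A B) := by
  have hM := isStrictlyPositive_rpow_neg_half_conj hA hB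
  rw [gm_eq_rpow hA.posSemidef.nonneg hB.posSemidef.nonneg]
  exact IsStrictlyPositive.conjugate_of_isUnit_of_isSelfAdjoint _ _
    (IsStrictlyPositive.rpow A _ hA.isStrictlyPositive).isUnit rpow_nonneg.isSelfAdjoint
    (IsStrictlyPositive.rpow _ t hM)

lemma gm_zero (hA : A.PosDef) (hB : B.PosSemidef) : gm 0 A B = A := by
  have hA' := hA.isStrictlyPositive
  rw [gm_eq_rpow hA'.nonneg hB.nonneg, rpow_zero _ (rpow_neg_half_conj_nonneg hB.nonneg), mul_one,
    ← rpow_add hA'.isUnit, add_halves, rpow_one A hA'.nonneg]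

lemma gm_one (hA : A.PosDef) (hB : B.PosSemidef) : gm 1 A B = B := by
  have hA' := hA.isStrictlyPositive
  rw [gm_eq_rpow hA'.nonneg hB.nonneg, rpow_one _ (rpow_neg_half_conj_nonneg hB.nonneg),
    rpow_conj_rpow_neg_cancel hA']

theorem gm_gm (hA : A.PosDef) (hB : B.PosDef) (s r t : ℝ) :
    gm t (gm s A B) (gm r A B) = gm ((1 - t) * s + t * r) A B := by
  rw [gm_eq_rpow (gm_isStrictlyPositive hA hB s).nonneg (gm_isStrictlyPositive hA hB r).nonneg]
  simp only [gm_eq_rpow hA.posSemidef.nonneg hB.posSemidef.nonneg]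
  exact rpow_conj_geodesic (IsStrictlyPositive.rpow A _ hA.isStrictlyPositive)
    (isStrictlyPositive_rpow_neg_half_conj hA hB) s r t

theorem gm_le_am_gm (hA : A.PosDef) (hB : B.PosDef) {t : ℝ} (ht : t ∈ Set.Icc (0 : ℝ) 1)
    (p q : ℝ) :
    gm ((1 - t) * p + t * q) A B ≤ am t (gm p A B) (gm q A B) := by
  simp only [gm_eq_rpow hA.posSemidef.nonneg hB.posSemidef.nonneg, am]
  set R := A ^ (1/2 : ℝ)
  set M := A ^ (-(1/2) : ℝ) * B * A ^ (-(1/2) : ℝ)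
  have hconv : M ^ ((1 - t) * p + t * q) ≤ (1 - t) • M ^ p + t • M ^ q :=
    (Matrix.convexOn_rpow_left (isStrictlyPositive_rpow_neg_half_conj hA hB)).2 trivial trivial
      (sub_nonneg.2 ht.2) ht.1 (sub_add_cancel 1 t)
  calc R * M ^ ((1 - t) * p + t * q) * R ≤ R * ((1 - t) • M ^ p + t • M ^ q) * R :=
        rpow_nonneg.isSelfAdjoint.conjugate_le_conjugate hconv
    _ = (1 - t) • (R * M ^ p * R) + t • (R * M ^ q * R) := by
        simp only [mul_add, add_mul, mul_smul_comm, smul_mul_assoc]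

theorem gm_le_am (hA : A.PosDef) (hB : B.PosDef) {t : ℝ} (ht : t ∈ Set.Icc (0 : ℝ) 1) :
    gm t A B ≤ am t A B := by
  simpa [gm_zero hA hB.posSemidef, gm_one hA hB.posSemidef] using gm_le_am_gm hA hB ht 0 1

lemma am_le_am {t : ℝ} (ht : t ∈ Set.Icc (0 : ℝ) 1) {X X' Y Y' : Matrix (Fin n) (Fin n) ℂ}
    (hX : X ≤ X') (hY : Y ≤ Y') : am t X Y ≤ am t X' Y' :=
  add_le_add (smul_le_smul_of_nonneg_left hX (sub_nonneg.2 ht.2))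
    (smul_le_smul_of_nonneg_left hY ht.1)

lemma am_am (t p q : ℝ) (X Y : Matrix (Fin n) (Fin n) ℂ) :
    am t (am p X Y) (am q X Y) = am ((1 - t) * p + t * q) X Y := by
  simp only [am]
  module

/-- Refined arithmetic–geometric mean inequality:
`A ♯_α B ≤ ((A ♯_α B) ♯_β A) ∇_α ((A ♯_α B) ♯_β B) ≤ A ∇_α B`. -/
theorem stmt5 {n : ℕ} (A B : Matrix (Fin n) (Fin n) ℂ) (hA : A.PosDef) (hB : B.PosDef)
    (α β : ℝ) (hα : α ∈ Set.Icc (0 : ℝ) 1) (hβ : β ∈ Set.Icc (0 : ℝ) 1) :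
    loewnerLE (gm α A B) (am α (gm β (gm α A B) A) (gm β (gm α A B) B)) ∧
    loewnerLE (am α (gm β (gm α A B) A) (gm β (gm α A B) B)) (am α A B) := by
  have hleft : gm β (gm α A B) A = gm ((1 - β) * α) A B := by
    have h := gm_gm hA hB α 0 β
    rwa [gm_zero hA hB.posSemidef, mul_zero, add_zero] at h
  have hright : gm β (gm α A B) B = gm ((1 - β) * α + β) A B := by
    have h := gm_gm hA hB α 1 β
    rwa [gm_one hA hB.posSemidef, mul_one] at h
  have hsplit : (1 - α) * ((1 - β) * α) + α * ((1 - β) * α + β) = α := by ring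
  have hγ₀ : 0 ≤ (1 - β) * α := mul_nonneg (sub_nonneg.2 hβ.2) hα.1
  have hδ₁ : 0 ≤ (1 - α) * (1 - β) := mul_nonneg (sub_nonneg.2 hα.2) (sub_nonneg.2 hβ.2)
  have hγ : (1 - β) * α ∈ Set.Icc (0 : ℝ) 1 := ⟨hγ₀, by linarith [hβ.1, hδ₁]⟩
  have hδ : (1 - β) * α + β ∈ Set.Icc (0 : ℝ) 1 := ⟨by linarith [hβ.1], by linarith⟩
  simp only [loewnerLE_iff_le, hleft, hright]
  constructor
  · simpa only [hsplit] using gm_le_am_gm hA hB hα ((1 - β) * α) ((1 - β) * α + β)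
  · calc am α (gm ((1 - β) * α) A B) (gm ((1 - β) * α + β) A B)
        ≤ am α (am ((1 - β) * α) A B) (am ((1 - β) * α + β) A B) :=
          am_le_am hα (gm_le_am hA hB hγ) (gm_le_am hA hB hδ)
      _ = am α A B := by rw [am_am, hsplit]
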